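/- For an invertible d×d matrix D and arbitrary d×d matrix E, with U(τ) = cosh(Dτ) - D⁻¹ sinh(Dτ) E and V(τ) = -sinh(Dτ) D + cosh(Dτ) E, one has the integral identity ∫₀^τ U(s) ds = D⁻²(E - V(τ)). -/

import Mathlib

open Matrix

/-- Matrix hyperbolic cosine, defined by its power series `∑ A^(2k)/(2k)!`. -/
noncomputable def mcosh {d : ℕ} (A : Matrix (Fin d) (Fin d) ℝ) : Matrix (Fin d) (Fin d) ℝ :=
  ∑' k : ℕ, (((2 * k).factorial : ℝ))⁻¹ • A ^ (2 * k)

/-- Matrix hyperbolic sine, defined by its power series `∑ A^(2k+1)/(2k+1)!`. -/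
noncomputable def msinh {d : ℕ} (A : Matrix (Fin d) (Fin d) ℝ) : Matrix (Fin d) (Fin d) ℝ :=
  ∑' k : ℕ, (((2 * k + 1).factorial : ℝ))⁻¹ • A ^ (2 * k + 1)

open NormedSpace

/-!
Both hyperbolic functions are halves of `exp (± A)`, so `t ↦ cosh (t D)` and `t ↦ sinh (t D)`
are differentiable, with derivatives `sinh (t D) D` and `cosh (t D) D`, and they commute with `D`.
Hence `t ↦ D⁻² (E - V t)` has derivative `D⁻² (cosh (t D) D² - sinh (t D) D E) = U t`, and it
vanishes at `t = 0`, where `V 0 = E`; the fundamental theorem of calculus, applied entrywise,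
gives the identity.
-/

section
variable {d : ℕ}

@[simp]
theorem mcosh_zero : mcosh (0 : Matrix (Fin d) (Fin d) ℝ) = 1 := by
  rw [mcosh, tsum_eq_single 0 fun k hk => by rw [zero_pow (by omega), smul_zero]]
  simp

@[simp]
theorem msinh_zero : msinh (0 : Matrix (Fin d) (Fin d) ℝ) = 0 := by
  simp [msinh]

theorem mcosh_neg (A : Matrix (Fin d) (Fin d) ℝ) : mcosh (-A) = mcosh A :=
  tsum_congr fun k => by rw [Even.neg_pow ⟨k, two_mul k⟩]

theorem msinh_neg (A : Matrix (Fin d) (Fin d) ℝ) : msinh (-A) = -msinh A := by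
  rw [msinh, msinh, ← tsum_neg]
  exact tsum_congr fun k => by rw [Odd.neg_pow ⟨k, rfl⟩, smul_neg]

attribute [local instance] Matrix.linftyOpNormedRing Matrix.linftyOpNormedAlgebra

theorem exp_eq_mcosh_add_msinh (A : Matrix (Fin d) (Fin d) ℝ) :
    exp A = mcosh A + msinh A := by
  have hs := expSeries_summable' (𝕂 := ℝ) A
  rw [exp_eq_tsum (𝕂 := ℝ), mcosh, msinh]
  -- without an explicit `f`, unifying `f (2 * k)` with the summands of `mcosh` times out
  exact (tsum_even_add_odd (f := fun n => ((n.factorial : ℝ))⁻¹ • A ^ n)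
    (hs.comp_injective (mul_right_injective₀ two_ne_zero))
    (hs.comp_injective ((add_left_injective 1).comp (mul_right_injective₀ two_ne_zero)))).symm

theorem mcosh_eq_exp (A : Matrix (Fin d) (Fin d) ℝ) :
    mcosh A = (2⁻¹ : ℝ) • (exp A + exp (-A)) := by
  rw [exp_eq_mcosh_add_msinh, exp_eq_mcosh_add_msinh, mcosh_neg, msinh_neg]
  module

theorem msinh_eq_exp (A : Matrix (Fin d) (Fin d) ℝ) :
    msinh A = (2⁻¹ : ℝ) • (exp A - exp (-A)) := by
  rw [exp_eq_mcosh_add_msinh, exp_eq_mcosh_add_msinh, mcosh_neg, msinh_neg]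
  module

theorem Commute.mcosh_right {A B : Matrix (Fin d) (Fin d) ℝ} (h : Commute A B) :
    Commute A (mcosh B) := by
  rw [mcosh_eq_exp]
  exact (h.exp_right.add_right h.neg_right.exp_right).smul_right _

theorem Commute.msinh_right {A B : Matrix (Fin d) (Fin d) ℝ} (h : Commute A B) :
    Commute A (msinh B) := by
  rw [msinh_eq_exp]
  exact (h.exp_right.sub_right h.neg_right.exp_right).smul_right _

theorem hasDerivAt_mcosh_smul (D : Matrix (Fin d) (Fin d) ℝ) (t : ℝ) :
    HasDerivAt (fun s : ℝ => mcosh (s • D)) (msinh (t • D) * D) t := by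
  simp only [mcosh_eq_exp, msinh_eq_exp, ← smul_neg]
  refine (((hasDerivAt_exp_smul_const D t).add
    (hasDerivAt_exp_smul_const (-D) t)).const_smul (2⁻¹ : ℝ)).congr_deriv ?_
  rw [smul_mul_assoc, sub_mul, mul_neg, sub_eq_add_neg]
  -- the sides differ only in the instance path to `AddCommGroup` (`linftyOp` vs. `Pi`)
  rfl

theorem hasDerivAt_msinh_smul (D : Matrix (Fin d) (Fin d) ℝ) (t : ℝ) :
    HasDerivAt (fun s : ℝ => msinh (s • D)) (mcosh (t • D) * D) t := by
  simp only [mcosh_eq_exp, msinh_eq_exp, ← smul_neg]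
  refine (((hasDerivAt_exp_smul_const D t).sub
    (hasDerivAt_exp_smul_const (-D) t)).const_smul (2⁻¹ : ℝ)).congr_deriv ?_
  rw [smul_mul_assoc, add_mul, mul_neg, sub_neg_eq_add]
  rfl

theorem hasDerivAt_antiderivative_U {D : Matrix (Fin d) (Fin d) ℝ} (hD : IsUnit D.det)
    (E : Matrix (Fin d) (Fin d) ℝ) (t : ℝ) :
    HasDerivAt (fun s : ℝ => (D ^ 2)⁻¹ * (E - (-(msinh (s • D) * D) + mcosh (s • D) * E)))
      (mcosh (t • D) - D⁻¹ * msinh (t • D) * E) t := by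
  have hDt : Commute D (t • D) := (Commute.refl D).smul_right t
  have hcosh : (D ^ 2)⁻¹ * (mcosh (t • D) * D * D) = mcosh (t • D) := by
    rw [mul_assoc, ← sq, ← (hDt.mcosh_right.pow_left 2).eq,
      nonsing_inv_mul_cancel_left _ _ (by rw [det_pow]; exact hD.pow 2)]
  have hsinh : (D ^ 2)⁻¹ * (msinh (t • D) * D * E) = D⁻¹ * msinh (t • D) * E := by
    rw [← hDt.msinh_right.eq, sq, Matrix.mul_inv_rev, mul_assoc, mul_assoc,
      nonsing_inv_mul_cancel_left _ _ hD, mul_assoc]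
  refine ((((hasDerivAt_msinh_smul D t).mul_const D).neg.add
    ((hasDerivAt_mcosh_smul D t).mul_const E)).const_sub E).const_mul (D ^ 2)⁻¹ |>.congr_deriv ?_
  rw [neg_add, neg_neg, mul_add, mul_neg, hcosh, hsinh, sub_eq_add_neg]

theorem continuous_U (D E : Matrix (Fin d) (Fin d) ℝ) :
    Continuous fun s : ℝ => mcosh (s • D) - D⁻¹ * msinh (s • D) * E :=
  continuous_iff_continuousAt.2 fun t => (hasDerivAt_mcosh_smul D t).continuousAt.sub
    ((continuousAt_const.mul (hasDerivAt_msinh_smul D t).continuousAt).mul continuousAt_const)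

end

section
attribute [local instance] Matrix.linftyOpNormedAddCommGroup Matrix.linftyOpNormedSpace

theorem intervalIntegral_apply_eq_sub_of_hasDerivAt {m n : Type*} [Fintype m] [Fintype n]
    {F F' : ℝ → Matrix m n ℝ} (hF : ∀ t, HasDerivAt F (F' t) t) (hF' : Continuous F')
    (a b : ℝ) (i : m) (j : n) :
    ∫ s in a..b, F' s i j = F b i j - F a i j := by
  let entry := (entryLinearMap ℝ ℝ i j).toContinuousLinearMap
  exact intervalIntegral.integral_eq_sub_of_hasDerivAt
    (fun t _ => entry.hasFDerivAt.comp_hasDerivAt t (hF t))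
    ((entry.continuous.comp hF').intervalIntegrable a b)

end

/-- For invertible `D` and arbitrary `E`, with `U(s) = cosh(Ds) - D⁻¹ sinh(Ds) E` and
`V(τ) = -sinh(Dτ) D + cosh(Dτ) E`, one has `∫₀^τ U(s) ds = D⁻²(E - V(τ))` (entrywise). -/
theorem integral_of_U {d : ℕ} (D E : Matrix (Fin d) (Fin d) ℝ) (hD : IsUnit D.det) (τ : ℝ) :
    ∀ i j, (∫ s in (0 : ℝ)..τ, (mcosh (s • D) - D⁻¹ * msinh (s • D) * E) i j) =
      ((D ^ 2)⁻¹ * (E - (-(msinh (τ • D) * D) + mcosh (τ • D) * E))) i j := by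
  intro i j
  rw [intervalIntegral_apply_eq_sub_of_hasDerivAt (hasDerivAt_antiderivative_U hD E)
    (continuous_U D E)]
  simp
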